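/- Let W^{op}(τ) be a differentiable family of d×q complex matrices satisfying Ẇ^{op} = (1/2)L W^{op} at τ=0 for a Hermitian matrix L, and let V(τ) be a differentiable family of q×q unitary matrices. Then for W(τ) = W^{op}(τ)V(τ), at τ=0 one has tr(Ẇ Ẇ†) = tr(Ẇ^{op}(Ẇ^{op})†) + tr(W^{op} V̇ V̇† (W^{op})†) ≥ tr(Ẇ^{op}(Ẇ^{op})†). -/

import Mathlib

open Matrix ComplexOrder

attribute [local instance] Matrix.normedAddCommGroup Matrix.normedSpace

/-! Write `Ẇ = Ẇop V + Wop V̇`. In the expansion of `tr(Ẇ Ẇᴴ)` the diagonal terms give the two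
traces of the claim (using `V Vᴴ = 1`), while the cross terms add up to `Re tr(H K)` with
`H = Wopᴴ L Wop` Hermitian and `K = V V̇ᴴ` skew-Hermitian (differentiate `V Vᴴ = 1`); such a trace
is purely imaginary. The inequality follows since `tr(B Bᴴ) ≥ 0` for `B = Wop V̇`. -/

section

variable {𝕜 : Type*} [RCLike 𝕜] {m n p : Type*} [Fintype m] [Fintype n] [Fintype p]

theorem HasDerivAt.matrix_mul {f : ℝ → Matrix m n 𝕜} {g : ℝ → Matrix n p 𝕜}
    {f' : Matrix m n 𝕜} {g' : Matrix n p 𝕜} {x : ℝ}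
    (hf : HasDerivAt f f' x) (hg : HasDerivAt g g' x) :
    HasDerivAt (fun τ => f τ * g τ) (f' * g x + f x * g') x := by
  have h := (mulLinearMap ℝ (A := 𝕜)).toContinuousBilinearMap.hasDerivAt_of_bilinear
    (fun _ => hf) (fun _ => hg)
  rw [add_comm] at h
  exact h

theorem HasDerivAt.mul_conjTranspose_add_eq_zero_of_unitary [DecidableEq n]
    {U : ℝ → Matrix n n 𝕜} {U' : Matrix n n 𝕜} {x : ℝ} (hU : ∀ τ, U τ ∈ unitaryGroup n 𝕜) (h : HasDerivAt U U' x) :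
    U' * (U x)ᴴ + U x * U'ᴴ = 0 := by
  have hconst : (fun τ => U τ * star (U τ)) = fun _ => 1 := funext fun τ => (hU τ).2
  exact (h.matrix_mul h.star).unique (hconst ▸ hasDerivAt_const x 1)

theorem Matrix.IsHermitian.star_trace_mul_eq_neg {H K : Matrix n n 𝕜} (hH : H.IsHermitian)
    (hK : Kᴴ = -K) : star (H * K).trace = -(H * K).trace := by
  rw [← trace_conjTranspose, conjTranspose_mul, hK, hH.eq, neg_mul, trace_neg, trace_mul_comm]

theorem Matrix.trace_add_mul_conjTranspose_add (X Y : Matrix m n 𝕜) :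
    ((X + Y) * (X + Y)ᴴ).trace =
      (X * Xᴴ).trace + (Y * Yᴴ).trace + ((X * Yᴴ).trace + star (X * Yᴴ).trace) := by
  rw [← trace_conjTranspose (X * Yᴴ), conjTranspose_mul, conjTranspose_conjTranspose,
    conjTranspose_add, Matrix.add_mul, Matrix.mul_add, Matrix.mul_add, trace_add, trace_add,
    trace_add]
  ring

end

/-- If `Ẇop(0) = (1/2) L Wop(0)` with `L` Hermitian and `V` is a differentiable family of
unitaries, then for `W = Wop * V`, at `τ = 0`,
`tr(Ẇ Ẇᴴ) = tr(Ẇop Ẇopᴴ) + tr(Wop V̇ V̇ᴴ Wopᴴ) ≥ tr(Ẇop Ẇopᴴ)`. -/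
theorem stmt3 {d q : ℕ} (Wop : ℝ → Matrix (Fin d) (Fin q) ℂ)
    (V : ℝ → Matrix (Fin q) (Fin q) ℂ)
    (Wopdot : Matrix (Fin d) (Fin q) ℂ) (Vdot : Matrix (Fin q) (Fin q) ℂ)
    (L : Matrix (Fin d) (Fin d) ℂ) (hL : L.IsHermitian)
    (hV : ∀ τ, V τ ∈ Matrix.unitaryGroup (Fin q) ℂ)
    (hWop : HasDerivAt Wop Wopdot 0)
    (hVd : HasDerivAt V Vdot 0)
    (hEq : Wopdot = (1 / 2 : ℂ) • (L * Wop 0)) :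
    ∀ Wdot : Matrix (Fin d) (Fin q) ℂ,
      HasDerivAt (fun τ => Wop τ * V τ) Wdot 0 →
        (Wdot * Wdotᴴ).trace =
            (Wopdot * Wopdotᴴ).trace + (Wop 0 * Vdot * Vdotᴴ * (Wop 0)ᴴ).trace ∧
          (Wopdot * Wopdotᴴ).trace ≤ (Wdot * Wdotᴴ).trace := by
  intro Wdot hW
  have hWdot : Wdot = Wopdot * V 0 + Wop 0 * Vdot := hW.unique (hWop.matrix_mul hVd)
  have hskew : (V 0 * Vdotᴴ)ᴴ = -(V 0 * Vdotᴴ) := by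
    rw [conjTranspose_mul, conjTranspose_conjTranspose]
    exact eq_neg_of_add_eq_zero_left (hVd.mul_conjTranspose_add_eq_zero_of_unitary hV)
  have hcross : (Wopdot * V 0 * (Wop 0 * Vdot)ᴴ).trace =
      (1 / 2 : ℂ) * ((Wop 0)ᴴ * L * Wop 0 * (V 0 * Vdotᴴ)).trace := by
    rw [hEq, smul_mul, smul_mul, trace_smul, smul_eq_mul, conjTranspose_mul]
    simp only [Matrix.mul_assoc]
    rw [trace_mul_comm (Wop 0)ᴴ]
    simp only [Matrix.mul_assoc]
  have hunitary : Wopdot * V 0 * (Wopdot * V 0)ᴴ = Wopdot * Wopdotᴴ := by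
    have hV0 : V 0 * (V 0)ᴴ = 1 := (hV 0).2
    rw [conjTranspose_mul, Matrix.mul_assoc, ← Matrix.mul_assoc (V 0), hV0, Matrix.one_mul]
  have hexpand : (Wdot * Wdotᴴ).trace =
      (Wopdot * Wopdotᴴ).trace + (Wop 0 * Vdot * Vdotᴴ * (Wop 0)ᴴ).trace := by
    rw [hWdot, trace_add_mul_conjTranspose_add, hcross, star_mul',
      (isHermitian_conjTranspose_mul_mul _ hL).star_trace_mul_eq_neg hskew, hunitary,
      conjTranspose_mul (Wop 0), ← Matrix.mul_assoc, show star (1 / 2 : ℂ) = 1 / 2 by norm_num]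
    ring
  refine ⟨hexpand, hexpand ▸ le_add_of_nonneg_right ?_⟩
  simpa [Matrix.mul_assoc] using (posSemidef_self_mul_conjTranspose (Wop 0 * Vdot)).trace_nonneg
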